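/- arXiv:1404.6546 — 5 statements merged into one kernel-verified Lean document; each statement's English description precedes it below -/
import Mathlib

section
/- Suppose δ : I → ℝ satisfies δ ∈ P and there exists π : T → ℝ such that the price conditions hold for (δ, π). Then δ maximizes the surplus S over P, i.e., for every δ' ∈ P one has S(δ') ≤ S(δ). -/
/-!
Pricing the contracts at `π` changes nothing on the feasible set: a clearing `δ'` pays and
receives the same amount `∑ₜ πₜ ∑ᵢ Qᵢₜ δ'ᵢ = 0`. Hence `S(δ') - S(δ) = ∑ᵢ (δ'ᵢ - δᵢ) cᵢ` with
`cᵢ = ∑ₜ (pᵢₜ - πₜ) Qᵢₜ`, and every summand is `≤ 0`: the price conditions force `δᵢ ≤ 0 ≤ δ'ᵢ`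
when `cᵢ < 0` and `δ'ᵢ ≤ δ̄ᵢ ≤ δᵢ` when `cᵢ > 0`.
-/

open Finset

section Clearing

variable {R I T : Type*} [CommRing R] [Fintype I] [Fintype T]

theorem sum_mul_sum_price_mul_eq_zero_of_clearing (Q : I → T → R) (π : T → R) {d : I → R}
    (hd : ∀ t, ∑ i, Q i t * d i = 0) :
    ∑ i, d i * ∑ t, π t * Q i t = 0 :=
  calc ∑ i, d i * ∑ t, π t * Q i t = ∑ t, π t * ∑ i, Q i t * d i := by
        simp only [mul_sum]
        rw [sum_comm]
        exact sum_congr rfl fun t _ => sum_congr rfl fun i _ => by ring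
    _ = 0 := by simp [hd]

theorem sum_mul_sum_sub_price_mul_eq_of_clearing (Q p : I → T → R) (π : T → R) {d : I → R}
    (hd : ∀ t, ∑ i, Q i t * d i = 0) :
    ∑ i, d i * ∑ t, (p i t - π t) * Q i t = ∑ i, d i * ∑ t, p i t * Q i t := by
  simp only [sub_mul, sum_sub_distrib, mul_sub,
    sum_mul_sum_price_mul_eq_zero_of_clearing Q π hd, sub_zero]

end Clearing

theorem sub_mul_nonpos_of_price_conditions {R : Type*} [Ring R] [LinearOrder R]
    [IsStrictOrderedRing R] {x x' b c : R} (hx' : 0 ≤ x' ∧ x' ≤ b)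
    (hc : (0 < x → 0 ≤ c) ∧ (x < b → c ≤ 0)) :
    (x' - x) * c ≤ 0 := by
  rcases lt_trichotomy c 0 with hneg | rfl | hpos
  · have hx : x ≤ 0 := not_lt.1 fun h => (hc.1 h).not_gt hneg
    exact mul_nonpos_of_nonneg_of_nonpos (sub_nonneg.2 (hx.trans hx'.1)) hneg.le
  · rw [mul_zero]
  · have hx : b ≤ x := not_lt.1 fun h => (hc.2 h).not_gt hpos
    exact mul_nonpos_of_nonpos_of_nonneg (sub_nonpos.2 (hx'.2.trans hx)) hpos.le

theorem price_conditions_imply_surplus_maximal_general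
    {I T : Type*} [Fintype I] [Fintype T]
    (Q p : I → T → ℤ) (δbar : I → ℕ)
    (δ : I → ℝ)
    (hclear : ∀ t, ∑ i, (Q i t : ℝ) * δ i = 0)
    (π : T → ℝ)
    (hprice : ∀ i : I,
        (0 < δ i → 0 ≤ ∑ t, ((p i t : ℝ) - π t) * (Q i t : ℝ)) ∧
        (δ i < (δbar i : ℝ) → ∑ t, ((p i t : ℝ) - π t) * (Q i t : ℝ) ≤ 0)) :
    ∀ δ' : I → ℝ,
      (∀ t, ∑ i, (Q i t : ℝ) * δ' i = 0) →
      (∀ i, 0 ≤ δ' i ∧ δ' i ≤ (δbar i : ℝ)) →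
      ∑ i, δ' i * ∑ t, (p i t : ℝ) * (Q i t : ℝ)
        ≤ ∑ i, δ i * ∑ t, (p i t : ℝ) * (Q i t : ℝ) := by
  intro δ' hclear' hbnd'
  let Qℝ : I → T → ℝ := fun i t => Q i t
  let pℝ : I → T → ℝ := fun i t => p i t
  rw [← sum_mul_sum_sub_price_mul_eq_of_clearing Qℝ pℝ π hclear',
    ← sum_mul_sum_sub_price_mul_eq_of_clearing Qℝ pℝ π hclear, ← sub_nonpos,
    ← sum_sub_distrib]
  exact sum_nonpos fun i _ => by
    rw [← sub_mul]
    exact sub_mul_nonpos_of_price_conditions (hbnd' i) (hprice i)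

/-- If `δ` is feasible (clearing and bound constraints) and there exist
prices `π` such that the price conditions hold for `(δ, π)`, then `δ` maximizes the
economic surplus over the feasible polytope. -/
theorem price_conditions_imply_surplus_maximal
    {I T : Type*} [Fintype I] [Fintype T]
    (Q p : I → T → ℤ) (δbar : I → ℕ)
    (δ : I → ℝ)
    (hclear : ∀ t, ∑ i, (Q i t : ℝ) * δ i = 0)
    (hbnd : ∀ i, 0 ≤ δ i ∧ δ i ≤ (δbar i : ℝ))
    (π : T → ℝ)
    (hprice : ∀ i : I,
        (0 < δ i → 0 ≤ ∑ t, ((p i t : ℝ) - π t) * (Q i t : ℝ)) ∧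
        (δ i < (δbar i : ℝ) → ∑ t, ((p i t : ℝ) - π t) * (Q i t : ℝ) ≤ 0)) :
    ∀ δ' : I → ℝ,
      (∀ t, ∑ i, (Q i t : ℝ) * δ' i = 0) →
      (∀ i, 0 ≤ δ' i ∧ δ' i ≤ (δbar i : ℝ)) →
      ∑ i, δ' i * ∑ t, (p i t : ℝ) * (Q i t : ℝ)
        ≤ ∑ i, δ i * ∑ t, (p i t : ℝ) * (Q i t : ℝ) :=
  price_conditions_imply_surplus_maximal_general Q p δbar δ hclear π hprice
end

section
/- Suppose δ* ∈ P maximizes the surplus S over P. Then there exists π : T → ℝ such that the price conditions hold for (δ*, π). -/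
/-!
At the maximizer `δ*`, a direction `d` with `∑ i, Q i t * d i = 0` for every contract `t`, which
raises only coordinates below their cap and lowers only positive coordinates, stays feasible for a
short step; hence it cannot raise the surplus. By Farkas' lemma, read as a theorem of alternatives
for the linear inequalities that the price conditions impose on `π`, this is exactly the
solvability of the price conditions.

Farkas' lemma is Hahn–Banach separation from a finitely generated cone, which is closed: by the
conic Carathéodory argument it is a finite union of cones spanned by linearly independent vectors,
each the image of a closed orthant under a closed embedding.
-/

open Set Finset

namespace PointedCone

variable {ι E : Type*} [AddCommGroup E] [Module ℝ E]

theorem mem_hull_range_iff [Fintype ι] {g : ι → E} {x : E} :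
    x ∈ hull ℝ (range g) ↔ ∃ l : ι → ℝ, 0 ≤ l ∧ ∑ k, l k • g k = x := by
  rw [Submodule.mem_span_range_iff_exists_fun]
  constructor
  · rintro ⟨c, rfl⟩
    exact ⟨fun k => c k, fun k => (c k).2, rfl⟩
  · rintro ⟨l, hl, rfl⟩
    exact ⟨fun k => ⟨l k, hl k⟩, rfl⟩

theorem mem_hull_image_finset_iff {g : ι → E} {s : Finset ι} {x : E} :
    x ∈ hull ℝ (g '' s) ↔ ∃ l : ι → ℝ, (∀ k ∈ s, 0 ≤ l k) ∧ ∑ k ∈ s, l k • g k = x := by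
  classical
  rw [Submodule.mem_span_image_finset_iff_exists_fun']
  constructor
  · rintro ⟨c, rfl⟩
    exact ⟨fun k => c k, fun k _ => (c k).2, rfl⟩
  · rintro ⟨l, hl, rfl⟩
    refine ⟨fun k => if hk : k ∈ s then ⟨l k, hl k hk⟩ else 0, Finset.sum_congr rfl fun k hk => ?_⟩
    simp [hk, Nonneg.mk_smul]

theorem hull_image_eq_biUnion_hull_image_erase [DecidableEq ι] {g : ι → E} {s : Finset ι}
    (hs : ¬LinearIndepOn ℝ g s) :
    (hull ℝ (g '' s) : Set E) = ⋃ k ∈ s, (hull ℝ (g '' ↑(s.erase k)) : Set E) := by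
  refine subset_antisymm ?_ <| iUnion₂_subset fun k _ =>
    Submodule.span_mono <| image_mono <| coe_subset.mpr <| s.erase_subset k
  intro x hx
  obtain ⟨l, hl, rfl⟩ := mem_hull_image_finset_iff.mp hx
  obtain ⟨c, hc, hc_ne⟩ := not_linearIndepOn_finset_iff.mp hs
  wlog hpos : ∃ k ∈ s, 0 < c k generalizing c
  · obtain ⟨k, hk, hck⟩ := hc_ne
    refine this (-c) (by simp [neg_smul, hc]) ⟨k, hk, by simpa⟩ ⟨k, hk, ?_⟩
    push Not at hpos
    simpa using (hpos k hk).lt_of_ne hck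
  obtain ⟨j, hj, hmin⟩ := (s.filter (0 < c ·)).exists_min_image (fun k => l k / c k)
    (by simpa [Finset.Nonempty] using hpos)
  obtain ⟨hjs, hcj⟩ := mem_filter.mp hj
  -- Move along the relation `c` until the first coefficient, the `j`-th, vanishes.
  set t := l j / c j
  have ht : 0 ≤ t := div_nonneg (hl j hjs) hcj.le
  refine mem_iUnion₂.mpr ⟨j, hjs, mem_hull_image_finset_iff.mpr ⟨l - t • c, fun k hk => ?_, ?_⟩⟩
  · have hks := (mem_erase.mp hk).2
    rcases le_or_gt (c k) 0 with hck | hck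
    · simpa using (mul_nonpos_of_nonneg_of_nonpos ht hck).trans (hl k hks)
    · simpa [le_div_iff₀ hck] using hmin k (mem_filter.mpr ⟨hks, hck⟩)
  · have hj0 : (l - t • c) j = 0 := by simp [t, hcj.ne']
    rw [Finset.sum_erase _ (by simp [hj0])]
    simp [sub_smul, Finset.sum_sub_distrib, mul_smul, ← Finset.smul_sum, hc]

variable [TopologicalSpace E] [IsTopologicalAddGroup E] [ContinuousSMul ℝ E] [T2Space E]

theorem isClosed_hull_range_of_linearIndependent [Fintype ι] {g : ι → E}
    (hg : LinearIndependent ℝ g) : IsClosed (hull ℝ (range g) : Set E) := by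
  have hemb := LinearMap.isClosedEmbedding_of_injective
    (LinearMap.ker_eq_bot.mpr (linearIndependent_iff_injective_fintypeLinearCombination.mp hg))
  convert hemb.isClosedMap _ (isClosed_Ici (a := (0 : ι → ℝ)))
  ext x
  simp [mem_hull_range_iff, Fintype.linearCombination_apply]

theorem isClosed_hull_image_finset (g : ι → E) (s : Finset ι) :
    IsClosed (hull ℝ (g '' s) : Set E) := by
  classical
  induction s using Finset.strongInduction with
  | H s ih =>
    by_cases hs : LinearIndepOn ℝ g s
    · rw [image_eq_range]
      exact isClosed_hull_range_of_linearIndependent hs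
    · rw [hull_image_eq_biUnion_hull_image_erase hs]
      exact isClosed_biUnion_finset fun k hk => ih _ (erase_ssubset hk)

theorem isClosed_hull_range [Finite ι] (g : ι → E) : IsClosed (hull ℝ (range g) : Set E) := by
  have := Fintype.ofFinite ι
  simpa using isClosed_hull_image_finset g univ

end PointedCone

open Matrix PointedCone Filter Topology

theorem Matrix.exists_mulVec_le_of_forall_vecMul_eq_zero {J T : Type*} [Fintype J] [Fintype T]
    (A : Matrix J T ℝ) (b : J → ℝ)
    (h : ∀ y : J → ℝ, 0 ≤ y → y ᵥ* A = 0 → 0 ≤ y ⬝ᵥ b) : ∃ x, A *ᵥ x ≤ b := by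
  classical
  -- `A x ≤ b` is solvable iff `(-1, 0)` can be separated from the cone spanned by the `(b j, A j)`
  -- and `(1, 0)`; the coordinate `none` carries the right-hand side.
  let g : Option J → Option T → ℝ := fun k => k.elim (Pi.single none 1) fun j o => o.elim (b j) (A j)
  let C : ProperCone ℝ (Option T → ℝ) := ⟨hull ℝ (range g), isClosed_hull_range g⟩
  have hnot : (Pi.single none (-1) : Option T → ℝ) ∉ C := by
    intro hmem
    obtain ⟨l, hl, hsum⟩ := mem_hull_range_iff.mp hmem
    have hA : (fun j => l (some j)) ᵥ* A = 0 := funext fun t => by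
      simpa [g, Fintype.sum_option, vecMul, dotProduct] using congrFun hsum (some t)
    have hb := congrFun hsum none
    have hyb := h _ (fun j => hl (some j)) hA
    simp only [g, Finset.sum_apply, Fintype.sum_option, Option.elim_none, Option.elim_some,
      Pi.smul_apply, Pi.single_eq_same, smul_eq_mul, mul_one, dotProduct] at hb hyb
    linarith [show 0 ≤ l none from hl none]
  obtain ⟨f, hfC, hf⟩ := C.hyperplane_separation_point hnot
  have hf_apply : ∀ v, f v = ∑ o, v o * f (Pi.single o 1) := fun v => by
    conv_lhs => rw [← Finset.univ_sum_single v]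
    simp only [map_sum]
    refine Finset.sum_congr rfl fun o _ => ?_
    rw [← smul_eq_mul, ← map_smul, ← Pi.single_smul, smul_eq_mul, mul_one]
  set r := f (Pi.single none 1)
  have hr : 0 < r := by
    rwa [Pi.single_neg, map_neg, neg_lt_zero] at hf
  refine ⟨fun t => -f (Pi.single (some t) 1) / r, fun j => ?_⟩
  have hgj := hfC (g (some j)) (subset_hull ⟨some j, rfl⟩)
  rw [hf_apply] at hgj
  simp only [Fintype.sum_option, g, Option.elim] at hgj
  have hsum : ∑ t, A j t * (-f (Pi.single (some t) 1) / r)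
      = -(∑ t, A j t * f (Pi.single (some t) 1)) / r := by
    rw [neg_div, Finset.sum_div, ← Finset.sum_neg_distrib]
    exact Finset.sum_congr rfl fun t _ => by ring
  rw [mulVec, dotProduct, hsum, div_le_iff₀ hr]
  linarith

theorem Matrix.exists_le_vecMul_le_of_forall_dotProduct_nonpos {I T : Type*} [Fintype I]
    [Fintype T] {M : Matrix T I ℝ} {c : I → ℝ} {L U : I → Prop}
    (h : ∀ d, M *ᵥ d = 0 → (∀ i, 0 < d i → U i) → (∀ i, d i < 0 → L i) → d ⬝ᵥ c ≤ 0) :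
    ∃ π : T → ℝ, ∀ i, (L i → (π ᵥ* M) i ≤ c i) ∧ (U i → c i ≤ (π ᵥ* M) i) := by
  classical
  -- One row per inequality; an inequality that is not imposed becomes the trivial row `0 ≤ 0`.
  let A : Matrix (I ⊕ I) T ℝ := of <| Sum.elim (fun i t => if L i then M t i else 0)
    (fun i t => if U i then -M t i else 0)
  let b : I ⊕ I → ℝ := Sum.elim (fun i => if L i then c i else 0) (fun i => if U i then -c i else 0)
  obtain ⟨π, hπ⟩ := exists_mulVec_le_of_forall_vecMul_eq_zero A b fun y hy hyA => by
    let d : I → ℝ := fun i => (if U i then y (.inr i) else 0) - (if L i then y (.inl i) else 0)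
    have hMd : M *ᵥ d = -(y ᵥ* A) := funext fun t => by
      simp only [mulVec, vecMul, dotProduct, Fintype.sum_sum_type, Pi.neg_apply, neg_add,
        ← Finset.sum_neg_distrib, ← Finset.sum_add_distrib]
      refine Finset.sum_congr rfl fun i _ => ?_
      simp only [d, A, of_apply, Sum.elim_inl, Sum.elim_inr]
      split_ifs <;> ring
    have hdc : d ⬝ᵥ c = -(y ⬝ᵥ b) := by
      simp only [dotProduct, Fintype.sum_sum_type, neg_add, ← Finset.sum_neg_distrib,
        ← Finset.sum_add_distrib]
      refine Finset.sum_congr rfl fun i _ => ?_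
      simp only [d, b, Sum.elim_inl, Sum.elim_inr]
      split_ifs <;> ring
    have hU : ∀ i, 0 < d i → U i := fun i hi => by
      by_contra hU
      simp only [d, hU, if_false, zero_sub, neg_pos] at hi
      split_ifs at hi <;> linarith [show 0 ≤ y (.inl i) from hy _]
    have hL : ∀ i, d i < 0 → L i := fun i hi => by
      by_contra hL
      simp only [d, hL, if_false, sub_zero] at hi
      split_ifs at hi <;> linarith [show 0 ≤ y (.inr i) from hy _]
    linarith [h d (by rw [hMd, hyA, neg_zero]) hU hL]
  refine ⟨π, fun i => ⟨fun hL => ?_, fun hU => ?_⟩⟩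
  · simpa [A, b, hL, mulVec, vecMul, dotProduct, mul_comm] using hπ (.inl i)
  · simpa [A, b, hU, mulVec, vecMul, dotProduct, mul_comm] using hπ (.inr i)

theorem eventually_le_add_mul {a x d : ℝ} (hax : a ≤ x) (hd : d < 0 → a < x) :
    ∀ᶠ ε in 𝓝[≥] 0, a ≤ x + ε * d := by
  rcases hax.lt_or_eq with hax | rfl
  · have : Tendsto (fun ε => x + ε * d) (𝓝 0) (𝓝 x) := by
      simpa using ((continuous_mul_const d).const_add x).tendsto (0 : ℝ)
    exact nhdsWithin_le_nhds <| (this.eventually (lt_mem_nhds hax)).mono fun _ => le_of_lt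
  · have hd : 0 ≤ d := not_lt.mp fun h => (hd h).false
    filter_upwards [self_mem_nhdsWithin] with ε hε
    exact le_add_of_nonneg_right (mul_nonneg hε hd)

theorem Matrix.dotProduct_nonpos_of_isMaxOn {I T : Type*} [Fintype I] [Fintype T]
    {M : Matrix T I ℝ} {c lo hi x d : I → ℝ}
    (hmax : IsMaxOn (· ⬝ᵥ c) {y | M *ᵥ y = 0 ∧ y ∈ Icc lo hi} x)
    (hx : M *ᵥ x = 0 ∧ x ∈ Icc lo hi) (hd : M *ᵥ d = 0)
    (hup : ∀ i, 0 < d i → x i < hi i) (hdown : ∀ i, d i < 0 → lo i < x i) :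
    d ⬝ᵥ c ≤ 0 := by
  have hcoord : ∀ i, ∀ᶠ ε in 𝓝[≥] (0 : ℝ), lo i ≤ x i + ε * d i ∧ x i + ε * d i ≤ hi i :=
    fun i => (eventually_le_add_mul (hx.2.1 i) (hdown i)).and <| by
      -- the upper bound is the lower bound for `-x` moving along `-d`
      refine (eventually_le_add_mul (neg_le_neg (hx.2.2 i))
        fun h => neg_lt_neg (hup i (neg_neg_iff_pos.mp h))).mono fun ε hε => ?_
      linarith [mul_neg ε (d i)]
  obtain ⟨ε, hbox, hε⟩ := ((eventually_all.mpr hcoord).filter_mono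
    (nhdsWithin_mono _ Set.Ioi_subset_Ici_self) |>.and self_mem_nhdsWithin).exists
  have hle := isMaxOn_iff.mp hmax (x + ε • d)
    ⟨by rw [mulVec_add, mulVec_smul, hx.1, hd, smul_zero, add_zero],
      fun i => (hbox i).1, fun i => (hbox i).2⟩
  rw [add_dotProduct, smul_dotProduct, smul_eq_mul, add_le_iff_nonpos_right] at hle
  exact nonpos_of_mul_nonpos_right hle hε

/-- If `δ*` is feasible and maximizes the economic surplus over the feasible
polytope, then there exist prices `π` such that the price conditions hold for `(δ*, π)`. -/
theorem surplus_maximal_implies_price_conditions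
    {I T : Type*} [Fintype I] [Fintype T]
    (Q p : I → T → ℤ) (δbar : I → ℕ)
    (δstar : I → ℝ)
    (hclear : ∀ t, ∑ i, (Q i t : ℝ) * δstar i = 0)
    (hbnd : ∀ i, 0 ≤ δstar i ∧ δstar i ≤ (δbar i : ℝ))
    (hmax : ∀ δ : I → ℝ,
        (∀ t, ∑ i, (Q i t : ℝ) * δ i = 0) →
        (∀ i, 0 ≤ δ i ∧ δ i ≤ (δbar i : ℝ)) →
        ∑ i, δ i * ∑ t, (p i t : ℝ) * (Q i t : ℝ)
          ≤ ∑ i, δstar i * ∑ t, (p i t : ℝ) * (Q i t : ℝ)) :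
    ∃ π : T → ℝ, ∀ i : I,
      (0 < δstar i → 0 ≤ ∑ t, ((p i t : ℝ) - π t) * (Q i t : ℝ)) ∧
      (δstar i < (δbar i : ℝ) → ∑ t, ((p i t : ℝ) - π t) * (Q i t : ℝ) ≤ 0) := by
  let M : Matrix T I ℝ := of fun t i => Q i t
  let c : I → ℝ := fun i => ∑ t, (p i t : ℝ) * Q i t
  have hfeas : M *ᵥ δstar = 0 ∧ δstar ∈ Icc 0 (fun i => (δbar i : ℝ)) :=
    ⟨funext hclear, fun i => (hbnd i).1, fun i => (hbnd i).2⟩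
  have hopt : IsMaxOn (· ⬝ᵥ c) {y | M *ᵥ y = 0 ∧ y ∈ Icc 0 (fun i => (δbar i : ℝ))} δstar :=
    isMaxOn_iff.mpr fun y hy => hmax y (congrFun hy.1) fun i => ⟨hy.2.1 i, hy.2.2 i⟩
  obtain ⟨π, hπ⟩ := exists_le_vecMul_le_of_forall_dotProduct_nonpos
    (L := fun i => 0 < δstar i) (U := fun i => δstar i < δbar i) fun d hd hup hdown =>
      dotProduct_nonpos_of_isMaxOn hopt hfeas hd hup hdown
  have hreduced : ∀ i, ∑ t, ((p i t : ℝ) - π t) * Q i t = c i - (π ᵥ* M) i := fun i => by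
    simp only [c, M, vecMul, dotProduct, of_apply, ← Finset.sum_sub_distrib]
    exact Finset.sum_congr rfl fun t _ => by ring
  exact ⟨π, fun i => ⟨fun h => by simpa [hreduced] using (hπ i).1 h,
    fun h => by simpa [hreduced] using (hπ i).2 h⟩⟩
end

section
/- Assume that for every i ∈ I the quantity vector Q i takes values in {−1, 0, 1}, has at most one entry equal to +1 and at most one entry equal to −1 (i.e., the orders form the arcs of a directed network on the contracts). Then the maximum of the surplus S over P is attained at an integral point: there exists δ* ∈ P with δ*ᵢ ∈ ℤ for all i ∈ I and S(δ*) ≥ S(δ) for all δ ∈ P. -/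
/-!
Every feasible point can be rounded to an integral one without lowering the surplus; applied to a
maximizer over the compact polytope this gives the theorem.

Let `F` be the set of orders (arcs) with fractional quantity. A contract (node) met by exactly one
arc of `F` would see a single fractional term in its integral conservation equation, so every node
meets no arc of `F` or at least two. Counting incidences, the arcs of `F` meet at most `|F|` nodes,
and if exactly `|F|` then every arc of `F` has a head and a tail, so its column lies in the
hyperplane of zero coordinate sum. Either way the columns of `F` are linearly dependent, giving a
nonzero circulation supported on `F`. Pushing flow along it, in the direction that does not lower
the surplus, until a coordinate of `F` reaches its floor or ceiling preserves feasibility and makes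
that coordinate integral.
-/

open Finset

section

variable {I T : Type*}

structure IsNetworkMatrix (Q : I → T → ℤ) : Prop where
  entry_mem : ∀ i t, Q i t = -1 ∨ Q i t = 0 ∨ Q i t = 1
  eq_of_eq_one : ∀ i t t', Q i t = 1 → Q i t' = 1 → t = t'
  eq_of_eq_neg_one : ∀ i t t', Q i t = -1 → Q i t' = -1 → t = t'

namespace IsNetworkMatrix

variable [Fintype T] {Q : I → T → ℤ}

theorem card_ne_zero_add_natAbs_sum_le_two (hQ : IsNetworkMatrix Q) (i : I) :
    #{t | Q i t ≠ 0} + (∑ t, Q i t).natAbs ≤ 2 := by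
  classical
  have hpos : #{t | Q i t = 1} ≤ 1 := card_le_one.mpr fun a ha b hb =>
    hQ.eq_of_eq_one i a b (mem_filter.mp ha).2 (mem_filter.mp hb).2
  have hneg : #{t | Q i t = -1} ≤ 1 := card_le_one.mpr fun a ha b hb =>
    hQ.eq_of_eq_neg_one i a b (mem_filter.mp ha).2 (mem_filter.mp hb).2
  have hsupp : #{t | Q i t ≠ 0} = #{t | Q i t = 1} + #{t | Q i t = -1} := by
    rw [← card_union_of_disjoint (disjoint_filter.mpr fun t _ h₁ h₂ => by omega), ← filter_or]
    congr 1
    ext t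
    have := hQ.entry_mem i t
    simp only [mem_filter, mem_univ, true_and]
    omega
  have hsum : ∑ t, Q i t = #{t | Q i t = 1} - #{t | Q i t = -1} := by
    rw [natCast_card_filter, natCast_card_filter, ← sum_sub_distrib]
    refine sum_congr rfl fun t _ => ?_
    rcases hQ.entry_mem i t with h | h | h <;> simp [h]
  omega

def incidentRows (Q : I → T → ℤ) (F : Finset I) : Finset T := {t | ∃ i ∈ F, Q i t ≠ 0}

theorem two_mul_card_incidentRows_add_le (hQ : IsNetworkMatrix Q) {F : Finset I}
    (hdeg : ∀ t, #{i ∈ F | Q i t ≠ 0} ≠ 1) :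
    2 * #(incidentRows Q F) + ∑ i ∈ F, (∑ t, Q i t).natAbs ≤ 2 * #F := by
  have hrows : 2 * #(incidentRows Q F) ≤ ∑ i ∈ F, #{t | Q i t ≠ 0} := calc
    2 * #(incidentRows Q F) = ∑ t ∈ incidentRows Q F, 2 := by rw [sum_const, smul_eq_mul, mul_comm]
    _ ≤ ∑ t ∈ incidentRows Q F, #{i ∈ F | Q i t ≠ 0} := sum_le_sum fun t ht => by
      obtain ⟨i, hi, hQi⟩ := (mem_filter.mp ht).2
      have : #{i ∈ F | Q i t ≠ 0} ≠ 0 := card_ne_zero_of_mem (mem_filter.mpr ⟨hi, hQi⟩)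
      have := hdeg t
      omega
    _ ≤ ∑ t, #{i ∈ F | Q i t ≠ 0} := sum_le_sum_of_subset (subset_univ _)
    _ = ∑ i ∈ F, #{t | Q i t ≠ 0} :=
      (sum_card_bipartiteAbove_eq_sum_card_bipartiteBelow (fun i t => Q i t ≠ 0) ..).symm
  have hcols : ∑ i ∈ F, (#{t | Q i t ≠ 0} + (∑ t, Q i t).natAbs) ≤ ∑ i ∈ F, 2 :=
    sum_le_sum fun i _ => hQ.card_ne_zero_add_natAbs_sum_le_two i
  rw [sum_add_distrib, sum_const, smul_eq_mul] at hcols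
  omega

theorem exists_submodule_finrank_lt (hQ : IsNetworkMatrix Q) {F : Finset I} (hF : F.Nonempty)
    (hdeg : ∀ t, #{i ∈ F | Q i t ≠ 0} ≠ 1) :
    ∃ W : Submodule ℝ (incidentRows Q F → ℝ),
      (∀ i ∈ F, (fun t : incidentRows Q F => (Q i t : ℝ)) ∈ W) ∧ Module.finrank ℝ W < #F := by
  have hcount := hQ.two_mul_card_incidentRows_add_le hdeg
  set N := incidentRows Q F
  rcases (show #N ≤ #F by omega).lt_or_eq with hlt | heq
  · exact ⟨⊤, fun _ _ => Submodule.mem_top, by simpa using hlt⟩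
  have hsum : ∀ i ∈ F, ∑ t, Q i t = 0 := fun i hi => by
    have := (sum_eq_zero_iff.mp (by omega : ∑ i ∈ F, (∑ t, Q i t).natAbs = 0)) i hi
    omega
  have hN : N.Nonempty := by rw [← card_pos, heq]; exact hF.card_pos
  let φ : (N → ℝ) →ₗ[ℝ] ℝ := ∑ t, LinearMap.proj t
  have hφ : ∀ w, φ w = ∑ t, w t := fun w => by simp [φ]
  refine ⟨LinearMap.ker φ, fun i hi => ?_,
    (Submodule.finrank_lt fun htop => ?_).trans_eq (by simp [heq])⟩
  · rw [LinearMap.mem_ker, hφ, sum_coe_sort N fun t => (Q i t : ℝ)]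
    rw [sum_subset (subset_univ N) fun t _ ht => ?_]
    · exact_mod_cast hsum i hi
    · by_contra h
      exact ht (mem_filter.mpr ⟨mem_univ t, i, hi, by exact_mod_cast h⟩)
  · have h1 : φ (fun _ => 1) = 0 := LinearMap.mem_ker.mp (htop ▸ Submodule.mem_top)
    rw [hφ] at h1
    simp [hN.ne_empty] at h1

theorem exists_ne_zero_sum_mul_eq_zero [Fintype I] (hQ : IsNetworkMatrix Q) {F : Finset I}
    (hF : F.Nonempty) (hdeg : ∀ t, #{i ∈ F | Q i t ≠ 0} ≠ 1) :
    ∃ v : I → ℝ, v ≠ 0 ∧ (∀ i ∉ F, v i = 0) ∧ ∀ t, ∑ i, (Q i t : ℝ) * v i = 0 := by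
  obtain ⟨W, hcol, hW⟩ := hQ.exists_submodule_finrank_lt hF hdeg
  let col : I → incidentRows Q F → ℝ := fun i t => Q i t
  have hdep : ¬LinearIndepOn ℝ col F := fun h => by
    have := (LinearIndependent.of_comp W.subtype
      (v := fun i : (F : Set I) => (⟨col i, hcol i i.2⟩ : W)) h).fintype_card_le_finrank
    simp only [Finset.coe_sort_coe, Fintype.card_coe] at this
    omega
  obtain ⟨s, g, hsF, hgs, hsum, i, -, hgi⟩ : ∃ s : Finset I, ∃ g : I → ℝ, ↑s ⊆ (F : Set I) ∧
      (∀ i ∉ s, g i = 0) ∧ ∑ i ∈ s, g i • col i = 0 ∧ ∃ i ∈ s, g i ≠ 0 := by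
    simpa [linearIndepOn_iff''] using hdep
  refine ⟨g, fun h => hgi (congrFun h i), fun j hj => hgs j fun h => hj (hsF h), fun t => ?_⟩
  rw [← sum_subset (subset_univ s) fun j _ hj => by simp [hgs j hj]]
  by_cases ht : t ∈ incidentRows Q F
  · simpa [col, mul_comm] using congrFun hsum ⟨t, ht⟩
  · refine sum_eq_zero fun j hj => ?_
    have : Q j t = 0 := by
      by_contra h
      exact ht (mem_filter.mpr ⟨mem_univ t, j, hsF hj, h⟩)
    simp [this]

end IsNetworkMatrix

section Rounding

variable [Fintype I]

noncomputable def fracSupport (x : I → ℝ) : Finset I := {i | Int.fract (x i) ≠ 0}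

theorem card_filter_fracSupport_ne_one {a : I → ℤ} (ha : ∀ i, a i = -1 ∨ a i = 0 ∨ a i = 1)
    {x : I → ℝ} (hx : ∑ i, (a i : ℝ) * x i = 0) : #{i ∈ fracSupport x | a i ≠ 0} ≠ 1 := by
  classical
  intro h
  obtain ⟨i₀, hi₀⟩ := card_eq_one.mp h
  have hmem : ∀ i, Int.fract (x i) ≠ 0 ∧ a i ≠ 0 ↔ i = i₀ := fun i => by
    simpa [fracSupport] using congrArg (i ∈ ·) hi₀
  have hrest : ∀ i ∈ univ.erase i₀, (a i : ℝ) * x i = ((a i * ⌊x i⌋ : ℤ) : ℝ) := fun i hi => by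
    by_cases hai : a i = 0
    · simp [hai]
    · have : Int.fract (x i) = 0 := by_contra fun h => ne_of_mem_erase hi ((hmem i).mp ⟨h, hai⟩)
      rw [Int.fract, sub_eq_zero] at this
      push_cast
      rw [← this]
  rw [← add_sum_erase _ _ (mem_univ i₀), sum_congr rfl hrest, ← Int.cast_sum,
    add_eq_zero_iff_eq_neg, ← Int.cast_neg] at hx
  obtain ⟨hfrac, hai₀⟩ := (hmem i₀).mpr rfl
  have hsq : (a i₀ : ℝ) * a i₀ = 1 := by
    rcases ha i₀ with h | h | h <;> simp [h] at hai₀ ⊢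
  have hint : x i₀ = ((a i₀ * -∑ i ∈ univ.erase i₀, a i * ⌊x i⌋ : ℤ) : ℝ) := by
    rw [Int.cast_mul, ← hx, ← mul_assoc, hsq, one_mul]
  exact hfrac (by rw [hint, Int.fract_intCast])

theorem exists_nonneg_add_smul_mem_Icc_eq_endpoint {x v lo hi : I → ℝ} (hlo : lo ≤ x)
    (hhi : x ≤ hi) (hv : v ≠ 0) :
    ∃ θ : ℝ, 0 ≤ θ ∧ x + θ • v ∈ Set.Icc lo hi ∧
      ∃ i, v i ≠ 0 ∧ (x i + θ * v i = lo i ∨ x i + θ * v i = hi i) := by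
  -- the step at which coordinate `i` reaches the end of `[lo i, hi i]` it is heading to
  let τ : I → ℝ := fun i => ((if 0 < v i then hi i else lo i) - x i) / v i
  have hτ : ∀ i, v i ≠ 0 → 0 ≤ τ i := fun i hi => by
    rcases hi.lt_or_gt with h | h
    · simp only [τ, if_neg h.not_gt]
      exact div_nonneg_of_nonpos (sub_nonpos.2 (hlo i)) h.le
    · simp only [τ, if_pos h]
      exact div_nonneg (sub_nonneg.2 (hhi i)) h.le
  obtain ⟨j, hj, hmin⟩ := exists_min_image {i | v i ≠ 0} τ
    (by simpa [Finset.Nonempty, Function.ne_iff] using hv)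
  simp only [mem_filter, mem_univ, true_and] at hj hmin
  have hθ := hτ j hj
  have hbox : ∀ i, lo i ≤ x i + τ j * v i ∧ x i + τ j * v i ≤ hi i := fun i => by
    rcases lt_trichotomy (v i) 0 with h | h | h
    · have := hmin i h.ne
      simp only [τ, if_neg h.not_gt, le_div_iff_of_neg h] at this
      constructor <;> nlinarith [hhi i]
    · simp [h, hlo i, hhi i]
    · have := hmin i h.ne'
      simp only [τ, if_pos h, le_div_iff₀ h] at this
      constructor <;> nlinarith [hlo i]
  refine ⟨τ j, hθ, ⟨fun i => (hbox i).1, fun i => (hbox i).2⟩, j, hj, ?_⟩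
  simp only [τ, div_mul_cancel₀ _ hj]
  split_ifs <;> simp

def feasibleSet (Q : I → T → ℤ) (δbar : I → ℕ) : Set (I → ℝ) :=
  {δ | (∀ t, ∑ i, (Q i t : ℝ) * δ i = 0) ∧ ∀ i, 0 ≤ δ i ∧ δ i ≤ δbar i}

variable {Q : I → T → ℤ} {δbar : I → ℕ}

theorem zero_mem_feasibleSet : 0 ∈ feasibleSet Q δbar := by
  simp [feasibleSet]

theorem isCompact_feasibleSet : IsCompact (feasibleSet Q δbar) := by
  refine (isCompact_Icc (a := 0) (b := fun i => (δbar i : ℝ))).of_isClosed_subset ?_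
    fun δ hδ => ⟨fun i => (hδ.2 i).1, fun i => (hδ.2 i).2⟩
  simp only [feasibleSet, Set.ofPred_and, Set.ofPred_forall]
  exact (isClosed_iInter fun t => isClosed_eq (by fun_prop) continuous_const).inter
    (isClosed_iInter fun i => (isClosed_le continuous_const (continuous_apply i)).inter
      (isClosed_le (continuous_apply i) continuous_const))

variable [Fintype T]

theorem IsNetworkMatrix.exists_mem_feasibleSet_card_fracSupport_lt (hQ : IsNetworkMatrix Q)
    (c : I → ℝ) {δ : I → ℝ} (hδ : δ ∈ feasibleSet Q δbar) (hfrac : (fracSupport δ).Nonempty) :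
    ∃ δ' ∈ feasibleSet Q δbar, #(fracSupport δ') < #(fracSupport δ) ∧
      ∑ i, δ i * c i ≤ ∑ i, δ' i * c i := by
  obtain ⟨hker, hbox⟩ := hδ
  obtain ⟨v, hv0, hvF, hvQ, hvc⟩ : ∃ v : I → ℝ, v ≠ 0 ∧ (∀ i ∉ fracSupport δ, v i = 0) ∧
      (∀ t, ∑ i, (Q i t : ℝ) * v i = 0) ∧ 0 ≤ ∑ i, v i * c i := by
    obtain ⟨v, hv0, hvF, hvQ⟩ := hQ.exists_ne_zero_sum_mul_eq_zero hfrac fun t =>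
      card_filter_fracSupport_ne_one (hQ.entry_mem · t) (hker t)
    rcases le_total 0 (∑ i, v i * c i) with h | h
    · exact ⟨v, hv0, hvF, hvQ, h⟩
    · exact ⟨-v, neg_ne_zero.mpr hv0, fun i hi => by simp [hvF i hi], fun t => by simp [hvQ t],
        by simpa using h⟩
  obtain ⟨θ, hθ, hmem, j, hvj, hj⟩ := exists_nonneg_add_smul_mem_Icc_eq_endpoint
    (lo := fun i => ⌊δ i⌋) (hi := fun i => ⌈δ i⌉) (fun i => Int.floor_le _) (fun i => Int.le_ceil _)
    hv0
  have hsub : fracSupport (δ + θ • v) ⊂ fracSupport δ := by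
    refine (ssubset_iff_of_subset fun i => ?_).mpr ⟨j, ?_, ?_⟩
    · simp only [fracSupport, mem_filter, mem_univ, true_and]
      contrapose!
      intro h
      simp [hvF i (by simpa [fracSupport] using h), h]
    · by_contra h
      exact hvj (hvF j h)
    · rcases hj with h | h <;> simp [fracSupport, h]
  refine ⟨δ + θ • v, ⟨fun t => ?_, fun i => ⟨?_, ?_⟩⟩, card_lt_card hsub, ?_⟩
  · simp [mul_add, sum_add_distrib, mul_left_comm _ θ, ← mul_sum, hker t, hvQ t]
  · have : 0 ≤ ⌊δ i⌋ := Int.floor_nonneg.mpr (hbox i).1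
    calc (0 : ℝ) ≤ ⌊δ i⌋ := by exact_mod_cast this
      _ ≤ δ i + θ * v i := hmem.1 i
  · have : ⌈δ i⌉ ≤ (δbar i : ℤ) := Int.ceil_le.mpr (by exact_mod_cast (hbox i).2)
    calc δ i + θ * v i ≤ ⌈δ i⌉ := hmem.2 i
      _ ≤ δbar i := by exact_mod_cast this
  · simp only [Pi.add_apply, Pi.smul_apply, smul_eq_mul, add_mul, sum_add_distrib, mul_assoc,
      ← mul_sum]
    exact le_add_of_nonneg_right (mul_nonneg hθ hvc)

theorem IsNetworkMatrix.exists_integral_mem_feasibleSet_le (hQ : IsNetworkMatrix Q) (c : I → ℝ)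
    {δ : I → ℝ} (hδ : δ ∈ feasibleSet Q δbar) :
    ∃ δ' ∈ feasibleSet Q δbar, (∀ i, ∃ z : ℤ, δ' i = z) ∧ ∑ i, δ i * c i ≤ ∑ i, δ' i * c i := by
  induction hn : #(fracSupport δ) using Nat.strong_induction_on generalizing δ with
  | _ n ih =>
    rcases (fracSupport δ).eq_empty_or_nonempty with h | h
    · refine ⟨δ, hδ, fun i => ?_, le_rfl⟩
      have : Int.fract (δ i) = 0 := by
        simpa [fracSupport] using filter_eq_empty_iff.mp h (mem_univ i)
      obtain ⟨z, hz⟩ := Int.fract_eq_zero_iff.mp this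
      exact ⟨z, hz.symm⟩
    · obtain ⟨δ₁, hδ₁, hlt, hle₁⟩ := hQ.exists_mem_feasibleSet_card_fracSupport_lt c hδ h
      obtain ⟨δ₂, hδ₂, hint, hle₂⟩ := ih _ (hn ▸ hlt) hδ₁ rfl
      exact ⟨δ₂, hδ₂, hint, hle₁.trans hle₂⟩

end Rounding

end

/-- If every order's quantity vector takes values in `{-1, 0, 1}` with at most
one `+1` entry and at most one `-1` entry (network structure), then the surplus maximum
over the feasible polytope is attained at an integral point. -/
theorem surplus_max_attained_at_integral_point
    {I T : Type*} [Fintype I] [Fintype T]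
    (Q p : I → T → ℤ) (δbar : I → ℕ)
    (hval : ∀ i t, Q i t = -1 ∨ Q i t = 0 ∨ Q i t = 1)
    (hpos : ∀ i t t', Q i t = 1 → Q i t' = 1 → t = t')
    (hneg : ∀ i t t', Q i t = -1 → Q i t' = -1 → t = t') :
    ∃ δstar : I → ℝ,
      (∀ t, ∑ i, (Q i t : ℝ) * δstar i = 0) ∧
      (∀ i, 0 ≤ δstar i ∧ δstar i ≤ (δbar i : ℝ)) ∧
      (∀ i, ∃ z : ℤ, δstar i = (z : ℝ)) ∧
      (∀ δ : I → ℝ,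
        (∀ t, ∑ i, (Q i t : ℝ) * δ i = 0) →
        (∀ i, 0 ≤ δ i ∧ δ i ≤ (δbar i : ℝ)) →
        ∑ i, δ i * ∑ t, (p i t : ℝ) * (Q i t : ℝ)
          ≤ ∑ i, δstar i * ∑ t, (p i t : ℝ) * (Q i t : ℝ)) := by
  let c : I → ℝ := fun i => ∑ t, (p i t : ℝ) * (Q i t : ℝ)
  obtain ⟨δmax, hδmax, hmax⟩ := isCompact_feasibleSet.exists_isMaxOn ⟨0, zero_mem_feasibleSet⟩
    (show Continuous fun δ : I → ℝ => ∑ i, δ i * c i by fun_prop).continuousOn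
  obtain ⟨δstar, ⟨hker, hbox⟩, hint, hle⟩ :=
    (IsNetworkMatrix.mk hval hpos hneg).exists_integral_mem_feasibleSet_le c hδmax
  exact ⟨δstar, hker, hbox, hint, fun δ hδker hδbox => (hmax ⟨hδker, hδbox⟩).trans hle⟩
end

section
/- Assume the matrix (Q i t)_{t∈T, i∈I} is totally unimodular and set V = 1 + Σ_{i∈I} δ̄ᵢ. Then every δ* ∈ P that maximizes V·S(δ) + Vol(δ) over P also maximizes S over P, and moreover Vol(δ*) ≥ Vol(δ) for every δ ∈ P with S(δ) = S(δ*). That is, an optimal solution of the combined weighted linear program is optimal for both the surplus-maximization LP and the subsequent volume-maximization LP. -/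
/-!
Every vertex of the feasible polytope is integral, because the clearing matrix is totally
unimodular, so the surplus `S` is an integer at every vertex. Let `u` be a vertex maximising `S`.
The maximisers of `V • S + Vol` form an exposed face `G`; let `v` be a vertex of `G` minimising
`S` on `G`. It is also a vertex of the polytope, and `V * (S u - S v) ≤ Vol v - Vol u < V`
forces the integer `S u - S v` to be `≤ 0`. Hence all of `G`, and `δ*` in particular, maximises
`S`, and among the surplus maximisers the volume term alone decides.
-/

def IsTotallyUnimodularMat {m n : Type*} [Fintype m] [Fintype n]
    (A : Matrix m n ℤ) : Prop :=
  ∀ (k : ℕ) (f : Fin k → m) (g : Fin k → n),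
    Function.Injective f → Function.Injective g →
      (A.submatrix f g).det = 0 ∨ (A.submatrix f g).det = 1 ∨ (A.submatrix f g).det = -1

section Scaling

variable {E : Type*} [AddCommGroup E] [Module ℝ E] [TopologicalSpace E] [T2Space E]
  [IsTopologicalAddGroup E] [ContinuousSMul ℝ E] [LocallyConvexSpace ℝ E] {K : Set E}

theorem IsCompact.exists_mem_extremePoints_isMaxOn (hK : IsCompact K) (hne : K.Nonempty)
    (f : StrongDual ℝ E) : ∃ x ∈ K.extremePoints ℝ, IsMaxOn f K x := by
  have hface : IsExposed ℝ K (f.toExposed K) := ContinuousLinearMap.toExposed.isExposed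
  obtain ⟨y, hyK, hymax⟩ := hK.exists_isMaxOn hne f.continuous.continuousOn
  obtain ⟨x, hx⟩ :=
    (hface.isCompact hK).extremePoints_nonempty ⟨y, hyK, fun z hz => hymax hz⟩
  exact ⟨x, hface.isExtreme.extremePoints_subset_extremePoints hx, fun z hz => hx.1.2 z hz⟩

theorem IsCompact.isMaxOn_of_isMaxOn_smul_add (hK : IsCompact K) {S W : StrongDual ℝ E} {V : ℝ}
    (hS : ∀ x ∈ K.extremePoints ℝ, ∃ N : ℤ, S x = N)
    (hW : ∀ x ∈ K, ∀ y ∈ K, W x - W y < V)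
    {x : E} (hxK : x ∈ K) (hx : IsMaxOn (V • S + W) K x) : IsMaxOn S K x := by
  set G := (V • S + W).toExposed K
  have hface : IsExposed ℝ K G := ContinuousLinearMap.toExposed.isExposed
  have hxG : x ∈ G := ⟨hxK, fun z hz => hx hz⟩
  obtain ⟨u, hu, humax⟩ := hK.exists_mem_extremePoints_isMaxOn ⟨x, hxK⟩ S
  obtain ⟨v, hv, hvmin⟩ :=
    (hface.isCompact hK).exists_mem_extremePoints_isMaxOn ⟨x, hxG⟩ (-S)
  have hvK := hface.isExtreme.extremePoints_subset_extremePoints hv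
  obtain ⟨N, hN⟩ := hS u hu
  obtain ⟨M, hM⟩ := hS v hvK
  have hV : 0 < V := by simpa using hW u hu.1 u hu.1
  -- `v` maximises `V • S + W` and `W` varies by less than `V` on `K`
  have hlt : V * S u < V * (S v + 1) := by
    have hvu := hv.1.2 u hu.1
    simp only [add_apply, smul_apply, smul_eq_mul] at hvu
    linarith [hW v hvK.1 u hu.1]
  have hNM : S u ≤ S v := by
    have hlt' := lt_of_mul_lt_mul_left hlt hV.le
    rw [hN, hM] at hlt' ⊢
    exact_mod_cast Int.lt_add_one_iff.mp (by exact_mod_cast hlt')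
  intro z hz
  calc S z ≤ S u := humax hz
    _ ≤ S v := hNM
    _ ≤ S x := neg_le_neg_iff.mp (hvmin hxG)

end Scaling

namespace Matrix

variable {m n : Type*} [Fintype m] [Fintype n] [DecidableEq n]

theorem exists_isUnit_submatrix_of_linearIndependent_col {K : Type*} [Field K]
    {M : Matrix m n K} (hM : LinearIndependent K M.col) :
    ∃ f : n → m, IsUnit (M.submatrix f id) := by
  obtain ⟨κ, a, ha, hspan, hli⟩ := exists_linearIndependent' K M.row
  have : Fintype κ := Fintype.ofInjective a ha
  have hrank : M.rank = Fintype.card n := by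
    rw [← rank_transpose, LinearIndependent.rank_matrix (by rwa [row_transpose])]
  have hcard : Fintype.card κ = Fintype.card n := by
    rw [← finrank_span_eq_card hli, hspan, ← rank_eq_finrank_span_row, hrank]
  let e : n ≃ κ := (Fintype.equivOfCardEq hcard).symm
  exact ⟨a ∘ e, linearIndependent_rows_iff_isUnit.mp (hli.comp e e.injective)⟩

theorem eq_intCast_comp_of_isUnit_det {B : Matrix n n ℤ} (hB : IsUnit B.det) {y : n → ℝ}
    {b : n → ℤ} (h : B.map (↑) *ᵥ y = (↑) ∘ b) : y = (↑) ∘ (B⁻¹ *ᵥ b) := by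
  have hinv : (B⁻¹).map ((↑) : ℤ → ℝ) * B.map (↑) = 1 := by
    simpa only [map_mul, map_one, RingHom.mapMatrix_apply, Int.coe_castRingHom] using
      congrArg (Int.castRingHom ℝ).mapMatrix (nonsing_inv_mul B hB)
  funext j
  calc y j = (((B⁻¹).map ((↑) : ℤ → ℝ) * B.map ((↑) : ℤ → ℝ)) *ᵥ y) j := by
        rw [hinv, one_mulVec]
    _ = _ := by
      rw [← mulVec_mulVec, h]
      exact ((Int.castRingHom ℝ).map_mulVec B⁻¹ b j).symm

theorem IsTotallyUnimodular.exists_eq_intCast_of_mulVec_eq {A : Matrix m n ℤ}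
    (hA : A.IsTotallyUnimodular) (hcol : LinearIndependent ℝ (A.map ((↑) : ℤ → ℝ)).col)
    {y : n → ℝ} {b : m → ℤ} (h : A.map (↑) *ᵥ y = (↑) ∘ b) :
    ∃ z : n → ℤ, y = (↑) ∘ z := by
  obtain ⟨f, hf⟩ := exists_isUnit_submatrix_of_linearIndependent_col hcol
  set B := A.submatrix f id
  have hdet : IsUnit B.det := by
    have hne : B.det ≠ 0 := by
      rw [← Int.cast_ne_zero (α := ℝ), Int.cast_det]
      exact ((isUnit_iff_isUnit_det _).mp hf).ne_zero
    obtain ⟨s, hs⟩ := (isTotallyUnimodular_iff_fintype A).mp hA n f id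
    rw [Int.isUnit_iff]
    rcases s with _ | _ | _ <;>
      simp only [SignType.zero_eq_zero, SignType.neg_eq_neg_one, SignType.pos_eq_one,
        SignType.coe_zero, SignType.coe_neg, SignType.coe_one] at hs
    · exact absurd hs.symm hne
    · exact .inr hs.symm
    · exact .inl hs.symm
  refine ⟨B⁻¹ *ᵥ (b ∘ f), eq_intCast_comp_of_isUnit_det hdet ?_⟩
  funext j
  exact congrFun h (f j)

end Matrix

section boxPolytope

open Matrix Filter Topology

variable {m n : Type*} [Fintype n]

def boxPolytope (A : Matrix m n ℤ) (b : m → ℤ) (l u : n → ℤ) : Set (n → ℝ) :=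
  {x | A.map (↑) *ᵥ x = (↑) ∘ b} ∩ Set.univ.pi fun i => Set.Icc (l i : ℝ) (u i)

variable {A : Matrix m n ℤ} {b : m → ℤ} {l u : n → ℤ}

theorem isCompact_boxPolytope : IsCompact (boxPolytope A b l u) :=
  (isCompact_univ_pi fun _ => isCompact_Icc).inter_left <|
    isClosed_eq (Continuous.matrix_mulVec continuous_const continuous_id) continuous_const

theorem eq_zero_of_mem_extremePoints_boxPolytope {x d : n → ℝ}
    (hx : x ∈ (boxPolytope A b l u).extremePoints ℝ) (hd : A.map (↑) *ᵥ d = 0)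
    (htight : ∀ i, x i = l i ∨ x i = u i → d i = 0) : d = 0 := by
  obtain ⟨⟨hxA, hxbox⟩, hxext⟩ := hx
  have hnear : ∀ᶠ t in 𝓝 (0 : ℝ), x + t • d ∈ boxPolytope A b l u := by
    refine Eventually.and (Eventually.of_forall fun t => ?_) (eventually_all.2 fun i => ?_)
    · simpa [mulVec_add, mulVec_smul, hd] using hxA
    by_cases hdi : d i = 0
    · exact Eventually.of_forall fun t => by simpa [hdi] using hxbox i trivial
    obtain ⟨hl, hu⟩ := hxbox i trivial
    have hfree : x i ∈ Set.Ioo (l i : ℝ) (u i) :=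
      ⟨hl.lt_of_ne fun h => hdi (htight i (.inl h.symm)),
        hu.lt_of_ne fun h => hdi (htight i (.inr h))⟩
    have hcont : Continuous fun t : ℝ => (x + t • d) i := by fun_prop
    filter_upwards [hcont.tendsto' 0 (x i) (by simp) |>.eventually (isOpen_Ioo.mem_nhds hfree)]
      with t ht _ using Set.Ioo_subset_Icc_self ht
  have hnear' : ∀ᶠ t in 𝓝 (0 : ℝ), x + (-t) • d ∈ boxPolytope A b l u :=
    (continuous_neg.tendsto' 0 0 neg_zero).eventually hnear
  obtain ⟨t, ⟨hplus, hminus⟩, ht⟩ :=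
    ((hnear.and hnear').filter_mono nhdsWithin_le_nhds |>.and
      (self_mem_nhdsWithin : ∀ᶠ t in 𝓝[≠] (0 : ℝ), t ≠ 0)).exists
  have hmid : x ∈ openSegment ℝ (x + t • d) (x + (-t) • d) :=
    ⟨1 / 2, 1 / 2, by norm_num, by norm_num, by norm_num, by module⟩
  have htd : t • d = 0 := add_eq_left.mp (hxext hplus hminus hmid)
  exact (smul_eq_zero.mp htd).resolve_left ht

theorem sum_sub_sum_le_of_mem_boxPolytope {x y : n → ℝ} (hx : x ∈ boxPolytope A b l u)
    (hy : y ∈ boxPolytope A b l u) : ∑ i, x i - ∑ i, y i ≤ ∑ i, ((u i : ℝ) - l i) := by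
  rw [← Finset.sum_sub_distrib]
  exact Finset.sum_le_sum fun i _ => sub_le_sub (hx.2 i trivial).2 (hy.2 i trivial).1

theorem Matrix.IsTotallyUnimodular.exists_eq_intCast_of_mem_extremePoints_boxPolytope [Fintype m]
    (hA : A.IsTotallyUnimodular) {x : n → ℝ}
    (hx : x ∈ (boxPolytope A b l u).extremePoints ℝ) :
    ∃ z : n → ℤ, x = (↑) ∘ z := by
  classical
  let J := {i // x i = l i ∨ x i = u i}
  have hJ : ∀ j : J, ∃ z : ℤ, x j = z := fun j => j.2.elim (⟨_, ·⟩) (⟨_, ·⟩)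
  choose w hw using hJ
  -- the equations together with the tight bounds, whose unique solution is `x`
  let A' : Matrix (m ⊕ J) n ℤ := (fromRows A 1).submatrix (Sum.map id Subtype.val) id
  have hA' : A'.IsTotallyUnimodular :=
    ((fromRows_one_isTotallyUnimodular_iff A).2 hA).submatrix _ _
  have hA'mulVec (d : n → ℝ) :
      A'.map ((↑) : ℤ → ℝ) *ᵥ d = Sum.elim (A.map (↑) *ᵥ d) fun j : J => d j := by
    ext (t | j) <;> simp [A', mulVec, dotProduct, one_apply]
  refine hA'.exists_eq_intCast_of_mulVec_eq (b := Sum.elim b w) ?_ ?_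
  · rw [← mulVec_injective_iff, ← coe_mulVecLin]
    refine (injective_iff_map_eq_zero _).2 fun d hd => ?_
    rw [mulVecLin_apply, hA'mulVec] at hd
    exact eq_zero_of_mem_extremePoints_boxPolytope hx (funext fun t => congrFun hd (.inl t))
      fun i hi => congrFun hd (.inr ⟨i, hi⟩)
  · rw [hA'mulVec]
    ext (t | j)
    · exact congrFun hx.1.1 t
    · exact hw j

end boxPolytope

theorem IsTotallyUnimodularMat.isTotallyUnimodular {m n : Type*} [Fintype m] [Fintype n]
    {A : Matrix m n ℤ} (hA : IsTotallyUnimodularMat A) : A.IsTotallyUnimodular := by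
  intro k f g hf hg
  rcases hA k f g hf hg with h | h | h
  · exact ⟨0, h.symm⟩
  · exact ⟨1, h.symm⟩
  · exact ⟨-1, by simp [h]⟩

/-- With the totally unimodular clearing matrix and the naive scaling factor
`V = 1 + Σᵢ δ̄ᵢ`, any maximizer of the combined weighted objective `V·S(δ) + Vol(δ)` over
the feasible polytope maximizes the surplus `S`, and among the surplus maximizers it
maximizes the volume `Vol`. -/
theorem weighted_objective_naive_scaling
    {I T : Type*} [Fintype I] [Fintype T]
    (Q p : I → T → ℤ) (δbar : I → ℕ)
    (hTU : IsTotallyUnimodularMat (Matrix.of fun (t : T) (i : I) => Q i t))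
    (V : ℝ) (hV : V = 1 + ∑ i, (δbar i : ℝ))
    (δstar : I → ℝ)
    (hclear : ∀ t, ∑ i, (Q i t : ℝ) * δstar i = 0)
    (hbnd : ∀ i, 0 ≤ δstar i ∧ δstar i ≤ (δbar i : ℝ))
    (hmax : ∀ δ : I → ℝ,
        (∀ t, ∑ i, (Q i t : ℝ) * δ i = 0) →
        (∀ i, 0 ≤ δ i ∧ δ i ≤ (δbar i : ℝ)) →
        V * (∑ i, δ i * ∑ t, (p i t : ℝ) * (Q i t : ℝ)) + ∑ i, δ i
          ≤ V * (∑ i, δstar i * ∑ t, (p i t : ℝ) * (Q i t : ℝ)) + ∑ i, δstar i) :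
    (∀ δ : I → ℝ,
        (∀ t, ∑ i, (Q i t : ℝ) * δ i = 0) →
        (∀ i, 0 ≤ δ i ∧ δ i ≤ (δbar i : ℝ)) →
        ∑ i, δ i * ∑ t, (p i t : ℝ) * (Q i t : ℝ)
          ≤ ∑ i, δstar i * ∑ t, (p i t : ℝ) * (Q i t : ℝ)) ∧
    (∀ δ : I → ℝ,
        (∀ t, ∑ i, (Q i t : ℝ) * δ i = 0) →
        (∀ i, 0 ≤ δ i ∧ δ i ≤ (δbar i : ℝ)) →
        ∑ i, δ i * ∑ t, (p i t : ℝ) * (Q i t : ℝ)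
          = ∑ i, δstar i * ∑ t, (p i t : ℝ) * (Q i t : ℝ) →
        ∑ i, δ i ≤ ∑ i, δstar i) := by
  set K := boxPolytope (Matrix.of fun t i => Q i t) 0 0 fun i => δbar i
  have hK : ∀ δ : I → ℝ, δ ∈ K ↔
      (∀ t, ∑ i, (Q i t : ℝ) * δ i = 0) ∧
        ∀ i, 0 ≤ δ i ∧ δ i ≤ (δbar i : ℝ) := by
    simp [K, boxPolytope, funext_iff, Matrix.mulVec, dotProduct, -Set.pi_univ_Icc]
  let S : StrongDual ℝ (I → ℝ) := LinearMap.toContinuousLinearMap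
    (Fintype.linearCombination ℝ fun i => ∑ t, (p i t : ℝ) * (Q i t : ℝ))
  let W : StrongDual ℝ (I → ℝ) := LinearMap.toContinuousLinearMap
    (Fintype.linearCombination ℝ fun _ => (1 : ℝ))
  have hS : ∀ δ, S δ = ∑ i, δ i * ∑ t, (p i t : ℝ) * (Q i t : ℝ) := fun _ => rfl
  have hW : ∀ δ, W δ = ∑ i, δ i := by simp [W, Fintype.linearCombination_apply]
  have hSint : ∀ x ∈ K.extremePoints ℝ, ∃ N : ℤ, S x = N := by
    intro x hx
    obtain ⟨z, rfl⟩ :=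
      hTU.isTotallyUnimodular.exists_eq_intCast_of_mem_extremePoints_boxPolytope hx
    exact ⟨∑ i, z i * ∑ t, p i t * Q i t, by simp [hS]⟩
  have hWlt : ∀ x ∈ K, ∀ y ∈ K, W x - W y < V := fun x hx y hy => by
    have hxy := sum_sub_sum_le_of_mem_boxPolytope hx hy
    simp only [Pi.zero_apply, Int.cast_zero, Int.cast_natCast, sub_zero] at hxy
    linarith [hW x, hW y]
  have hSmax := isCompact_boxPolytope.isMaxOn_of_isMaxOn_smul_add hSint hWlt
    ((hK δstar).2 ⟨hclear, hbnd⟩) fun δ hδ => by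
      simpa [hS, hW] using hmax δ ((hK δ).1 hδ).1 ((hK δ).1 hδ).2
  refine ⟨fun δ h₁ h₂ => hSmax ((hK δ).2 ⟨h₁, h₂⟩), fun δ h₁ h₂ heq => ?_⟩
  have hδ := hmax δ h₁ h₂
  rw [heq] at hδ
  linarith
end

section
/- The bound G > d̄·(1 + m) in the weighted objective theorem is tight: there exist m, n ≥ 1, an m × n unimodular integer matrix A of rank m, vectors c ∈ ℤⁿ, d, u ∈ ℝⁿ, b ∈ ℝᵐ with d̄ = max_i |d_i| > 0, the scaling factor G = d̄·(1 + m), a basis B (a set of m column indices with A_B invertible), and an optimal solution x* of max {(G·c + d)ᵀx | A x = b, 0 ≤ x ≤ u} with x*_j ∈ {0, u_j} for all j ∉ B, such that the conclusion of the weighted objective theorem fails: either x* does not maximize dᵀx among the maximizers of cᵀx over {x | A x = b, 0 ≤ x ≤ u}, or π with πᵀ = c_Bᵀ (A_B)⁻¹ is not optimal for the dual of max {cᵀx | A x = b, 0 ≤ x ≤ u}. -/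
/-!
Take `A = (1 1)`, `c = (0, 1)`, `d = (1, -1)`, `u = (1, 2)` and `b = 1`, so `d̄ = 1` and
`G = d̄ (1 + m) = 2`. Then `G c + d = (1, 1) = 1ᵀ A` is constant on the feasible segment, so
`x* = (1, 0)` with basis `{1}` solves the weighted program. But `c_B = 0` gives `π = 0`, and
dual feasibility `γ - λ = c` then forces `γ₂ ≥ 1`, so every dual value is at least `u₂ = 2`,
whereas `cᵀx = x₂ ≤ 1` on the feasible set.
-/

open Matrix

/-- An `m × n` integer matrix of rank `m` is unimodular if every `m × m` nonsingular
submatrix has determinant `±1`. -/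
def IsUnimodularMat {m n : ℕ} (A : Matrix (Fin m) (Fin n) ℤ) : Prop :=
  ∀ g : Fin m → Fin n, Function.Injective g →
    (A.submatrix id g).det ≠ 0 →
      (A.submatrix id g).det = 1 ∨ (A.submatrix id g).det = -1

/-- The primal feasible set `{x | A x = b, 0 ≤ x ≤ u}`. -/
def primalSet {m n : ℕ} (A : Matrix (Fin m) (Fin n) ℝ) (b : Fin m → ℝ) (u : Fin n → ℝ) :
    Set (Fin n → ℝ) :=
  {x | A.mulVec x = b ∧ ∀ j, 0 ≤ x j ∧ x j ≤ u j}

section Duality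

variable {m n : ℕ} {A : Matrix (Fin m) (Fin n) ℝ} {b : Fin m → ℝ} {u x : Fin n → ℝ}

theorem vecMul_dotProduct_of_mem_primalSet (hx : x ∈ primalSet A b u) (π : Fin m → ℝ) :
    (π ᵥ* A) ⬝ᵥ x = b ⬝ᵥ π := by
  rw [← dotProduct_mulVec, hx.1, dotProduct_comm]

theorem dotProduct_le_of_mem_primalSet (hx : x ∈ primalSet A b u) {w γ lam : Fin n → ℝ}
    {π : Fin m → ℝ} (hγ : ∀ j, 0 ≤ γ j) (hlam : ∀ j, 0 ≤ lam j)
    (hdual : Aᵀ *ᵥ π + γ - lam = w) :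
    w ⬝ᵥ x ≤ b ⬝ᵥ π + u ⬝ᵥ γ := by
  have hγx : γ ⬝ᵥ x ≤ γ ⬝ᵥ u :=
    dotProduct_le_dotProduct_of_nonneg_left (fun j => (hx.2 j).2) hγ
  have hlamx : 0 ≤ lam ⬝ᵥ x := dotProduct_nonneg_of_nonneg hlam (fun j => (hx.2 j).1)
  rw [← hdual, mulVec_transpose, sub_dotProduct, add_dotProduct,
    vecMul_dotProduct_of_mem_primalSet hx, dotProduct_comm u]
  linarith

end Duality

theorem Matrix.rank_eq_card_of_isUnit_det_submatrix {K m n : Type*} [Field K] [Fintype m]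
    [DecidableEq m] [Fintype n] (A : Matrix m n K) (β : m → n)
    (h : IsUnit (A.submatrix id β).det) : A.rank = Fintype.card m :=
  le_antisymm A.rank_le_card_height <|
    ((A.submatrix id β).rank_of_isUnit ((isUnit_iff_isUnit_det _).2 h)).symm.le.trans
      (A.rank_submatrix_le id β)

theorem isUnimodularMat_of_abs_le_one {n : ℕ} (A : Matrix (Fin 1) (Fin n) ℤ)
    (hA : ∀ j, |A 0 j| ≤ 1) : IsUnimodularMat A := by
  intro g _ hdet
  rw [det_fin_one, submatrix_apply, id] at hdet ⊢
  exact (Int.abs_le_one_iff.1 (hA (g 0))).resolve_left hdet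

namespace TightInstance

def A : Matrix (Fin 1) (Fin 2) ℤ := !![1, 1]
def c : Fin 2 → ℤ := ![0, 1]
def d : Fin 2 → ℝ := ![1, -1]
def u : Fin 2 → ℝ := ![1, 2]
def b : Fin 1 → ℝ := ![1]
def β : Fin 1 → Fin 2 := fun _ => 0
def xstar : Fin 2 → ℝ := ![1, 0]

theorem isUnimodularMat_A : IsUnimodularMat A :=
  isUnimodularMat_of_abs_le_one A (by decide)

theorem isUnit_det_basis : IsUnit ((A.map (fun z : ℤ => (z : ℝ))).submatrix id β).det := by
  simp [A, β]

theorem isGreatest_abs_d : IsGreatest (Set.range fun j => |d j|) 1 := by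
  refine ⟨⟨0, by simp [d]⟩, ?_⟩
  rintro _ ⟨j, rfl⟩
  fin_cases j <;> simp [d]

theorem xstar_mem : xstar ∈ primalSet (A.map (fun z : ℤ => (z : ℝ))) b u := by
  refine ⟨?_, fun j => ?_⟩
  · ext i
    simp [A, b, xstar, mulVec, dotProduct]
  · fin_cases j <;> norm_num [xstar, u]

theorem xstar_of_nonbasic (j : Fin 2) (hj : ∀ k, β k ≠ j) : xstar j = 0 ∨ xstar j = u j := by
  fin_cases j
  · exact absurd rfl (hj 0)
  · exact Or.inl rfl

variable {x : Fin 2 → ℝ}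

theorem weighted_objective_eq_one (hx : x ∈ primalSet (A.map (fun z : ℤ => (z : ℝ))) b u) :
    ∑ j, (2 * (c j : ℝ) + d j) * x j = 1 := by
  have hw : (fun j => 2 * (c j : ℝ) + d j) = ![1] ᵥ* A.map (fun z : ℤ => (z : ℝ)) := by
    ext j
    fin_cases j <;> norm_num [A, c, d, vecMul, dotProduct]
  have := vecMul_dotProduct_of_mem_primalSet hx ![1]
  rw [← hw] at this
  simpa [b] using this

theorem objective_le_one (hx : x ∈ primalSet (A.map (fun z : ℤ => (z : ℝ))) b u) :
    ∑ j, (c j : ℝ) * x j ≤ 1 := by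
  have hdual : (A.map (fun z : ℤ => (z : ℝ)))ᵀ *ᵥ ![1] + 0 - ![1, 0] = fun j => (c j : ℝ) := by
    ext j
    fin_cases j <;> norm_num [A, c, mulVec, dotProduct]
  simpa [b] using dotProduct_le_of_mem_primalSet hx (fun _ => le_rfl)
    (by simp [Fin.forall_fin_two]) hdual

theorem basis_dual_eq_zero :
    vecMul (fun k => (c (β k) : ℝ)) ((A.map (fun z : ℤ => (z : ℝ))).submatrix id β)⁻¹ = 0 := by
  have hcβ : (fun k => (c (β k) : ℝ)) = 0 := by
    ext k
    simp [c, β]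
  rw [hcβ, zero_vecMul]

theorem not_basis_dual_optimal : ¬ ∃ γ lam : Fin 2 → ℝ,
    (∀ j, 0 ≤ γ j) ∧ (∀ j, 0 ≤ lam j) ∧
    (A.map (fun z : ℤ => (z : ℝ)))ᵀ.mulVec
        (vecMul (fun k => (c (β k) : ℝ)) ((A.map (fun z : ℤ => (z : ℝ))).submatrix id β)⁻¹)
          + γ - lam = (fun j => (c j : ℝ)) ∧
    IsGreatest ((fun x => ∑ j, (c j : ℝ) * x j) '' primalSet (A.map (fun z : ℤ => (z : ℝ))) b u)
      ((∑ i, b i * vecMul (fun k => (c (β k) : ℝ))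
          ((A.map (fun z : ℤ => (z : ℝ))).submatrix id β)⁻¹ i) + ∑ j, u j * γ j) := by
  rintro ⟨γ, lam, hγ, hlam, hdual, ⟨x, hx, hval⟩, -⟩
  rw [basis_dual_eq_zero] at hdual hval
  have hγ₁ : γ 1 = 1 + lam 1 := by
    have := congrFun hdual 1
    simp only [mulVec_zero, zero_add, Pi.sub_apply, c, cons_val_one, cons_val_fin_one,
      Int.cast_one] at this
    linarith
  have hle : ∑ i, b i * (0 : Fin 1 → ℝ) i + ∑ j, u j * γ j ≤ 1 := hval ▸ objective_le_one hx
  simp [b, u, Fin.sum_univ_two] at hle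
  linarith [hγ 0, hlam 1]

end TightInstance

/-- The bound `G > d̄·(1 + m)` in the weighted objective theorem is tight:
with `G = d̄·(1 + m)` there is an instance (a unimodular full-rank matrix, data, an
optimal basis `B`, and a basic optimal solution `x*` of the weighted program) for which
the conclusion of the weighted objective theorem fails. -/
theorem weighted_objective_theorem_bound_tight :
    ∃ (m n : ℕ), 1 ≤ m ∧ 1 ≤ n ∧
    ∃ (A : Matrix (Fin m) (Fin n) ℤ)
      (c : Fin n → ℤ) (d u : Fin n → ℝ) (b : Fin m → ℝ)
      (dbar G : ℝ)
      (β : Fin m → Fin n) (xstar : Fin n → ℝ),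
      IsUnimodularMat A ∧
      (A.map (fun z : ℤ => (z : ℝ))).rank = m ∧
      IsGreatest (Set.range fun j => |d j|) dbar ∧
      0 < dbar ∧
      G = dbar * (1 + (m : ℝ)) ∧
      Function.Injective β ∧
      IsUnit ((A.map (fun z : ℤ => (z : ℝ))).submatrix id β).det ∧
      xstar ∈ primalSet (A.map (fun z : ℤ => (z : ℝ))) b u ∧
      (∀ x ∈ primalSet (A.map (fun z : ℤ => (z : ℝ))) b u,
        ∑ j, (G * (c j : ℝ) + d j) * x j ≤ ∑ j, (G * (c j : ℝ) + d j) * xstar j) ∧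
      (∀ j : Fin n, (∀ k : Fin m, β k ≠ j) → xstar j = 0 ∨ xstar j = u j) ∧
      (¬ (∀ x ∈ primalSet (A.map (fun z : ℤ => (z : ℝ))) b u,
            (∀ x' ∈ primalSet (A.map (fun z : ℤ => (z : ℝ))) b u,
              ∑ j, (c j : ℝ) * x' j ≤ ∑ j, (c j : ℝ) * x j) →
            ∑ j, d j * x j ≤ ∑ j, d j * xstar j) ∨
       ¬ (∃ γ lam : Fin n → ℝ,
            (∀ j, 0 ≤ γ j) ∧ (∀ j, 0 ≤ lam j) ∧
            (A.map (fun z : ℤ => (z : ℝ)))ᵀ.mulVec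
                (Matrix.vecMul (fun k => (c (β k) : ℝ))
                  ((A.map (fun z : ℤ => (z : ℝ))).submatrix id β)⁻¹) + γ - lam
              = (fun j => (c j : ℝ)) ∧
            IsGreatest ((fun x => ∑ j, (c j : ℝ) * x j) ''
                primalSet (A.map (fun z : ℤ => (z : ℝ))) b u)
              ((∑ i, b i * Matrix.vecMul (fun k => (c (β k) : ℝ))
                  ((A.map (fun z : ℤ => (z : ℝ))).submatrix id β)⁻¹ i) +
                ∑ j, u j * γ j))) := by
  open TightInstance in
  refine ⟨1, 2, le_rfl, one_le_two, A, c, d, u, b, 1, 2, β, xstar, isUnimodularMat_A,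
    (rank_eq_card_of_isUnit_det_submatrix _ β isUnit_det_basis).trans (Fintype.card_fin 1),
    isGreatest_abs_d, one_pos, by norm_num, Function.injective_of_subsingleton β,
    isUnit_det_basis, xstar_mem, fun x hx => ?_, xstar_of_nonbasic, Or.inr not_basis_dual_optimal⟩
  rw [weighted_objective_eq_one hx, weighted_objective_eq_one xstar_mem]
end
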